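/- (Global error bound.) Let F : ℝ → ℝ be continuously differentiable with L-Lipschitz derivative F′. Then the dual quantization scheme satisfies |E F(X^n) − E F(X̂^n)| ≤ L · Σ_{k=1}^n E|(X̂^{k−1} + α_k Z_k) − X̂^k|², where X^n = Σ_{i=1}^n α_i Z_i and X̂^k = J_{Γ_k}(X̂^{k−1} + α_k Z_k, Λ_k). -/

import Mathlib

open MeasureTheory ProbabilityTheory

/-- Index `j*(ξ)` of the segment `[x_j, x_{j+1})` of the grid containing `ξ`
(with default value `N`, corresponding to the closed last segment). -/
noncomputable def jstar (N : ℕ) (x : ℕ → ℝ) (ξ : ℝ) : ℕ :=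
  if h : ∃ j, j ≤ N ∧ x j ≤ ξ ∧ ξ < x (j + 1) then h.choose else N

/-- The dual quantization operator `J_Γ(ξ, λ)` associated with the grid
`x 0 ≤ x 1 ≤ … ≤ x (N+1)`. -/
noncomputable def dualQ (N : ℕ) (x : ℕ → ℝ) (ξ lam : ℝ) : ℝ :=
  if x (jstar N x ξ + 1) = x (jstar N x ξ) then ξ
  else if lam < (x (jstar N x ξ + 1) - ξ) / (x (jstar N x ξ + 1) - x (jstar N x ξ)) then
    x (jstar N x ξ)
  else x (jstar N x ξ + 1)

/-- The dual quantization scheme `X̂⁰ := 0`, `X̂ᵏ⁺¹ := J_{Γₖ}(X̂ᵏ + αₖ Zₖ, Λₖ)`,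
where the grid `Γₖ` (used in the step producing `X̂ᵏ⁺¹`) has `Nk k` interior points
given by `x k 1, …, x k (Nk k)`. -/
noncomputable def XhatScheme {Ω : Type*} (Nk : ℕ → ℕ) (x : ℕ → ℕ → ℝ) (α : ℕ → ℝ)
    (Z Λ : ℕ → Ω → ℝ) : ℕ → Ω → ℝ
  | 0 => fun _ => 0
  | k + 1 => fun ω =>
      dualQ (Nk k) (x k) (XhatScheme Nk x α Z Λ k ω + α k * Z k ω) (Λ k ω)

open Set

/-!
Telescope over the hybrids `Yₖ = X̂ᵏ + ∑_{i ≥ k} αᵢ Zᵢ`, which run from `Y₀ = Xⁿ` to `Yₙ = X̂ⁿ`.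
Passing from `Yₖ` to `Yₖ₊₁` replaces `ξ = X̂ᵏ + αₖ Zₖ` by `J(ξ, Λₖ)`. Because `Λₖ` is uniform and
independent of all other coordinates and `∫₀¹ J(ξ, λ) dλ = ξ`, the first-order Taylor term
`E[F′(Yₖ) (Yₖ₊₁ − Yₖ)]` vanishes, and the Taylor remainder is at most `L |Yₖ₊₁ − Yₖ|²`.
-/

lemma abs_sub_sub_deriv_mul_le {F : ℝ → ℝ} {L : NNReal} (hF : Differentiable ℝ F)
    (hFlip : LipschitzWith L (deriv F)) (y z : ℝ) :
    |F z - F y - deriv F y * (z - y)| ≤ L * |z - y| ^ 2 := by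
  have hderiv : ∀ t, HasDerivAt (fun t => F t - deriv F y * t) (deriv F t - deriv F y) t :=
    fun t => by
      simpa using (hF t).hasDerivAt.fun_sub ((hasDerivAt_id' t).const_mul (deriv F y))
  have hbound : ∀ t ∈ uIcc y z, ‖deriv F t - deriv F y‖ ≤ L * |z - y| := fun t ht =>
    (hFlip.dist_le_mul t y).trans (mul_le_mul_of_nonneg_left (abs_sub_left_of_mem_uIcc ht)
      L.coe_nonneg)
  have := Convex.norm_image_sub_le_of_norm_hasDerivWithin_le
    (fun t _ => (hderiv t).hasDerivWithinAt) hbound (convex_uIcc y z) left_mem_uIcc right_mem_uIcc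
  rw [Real.norm_eq_abs, Real.norm_eq_abs] at this
  rwa [show F z - F y - deriv F y * (z - y) = F z - deriv F y * z - (F y - deriv F y * y) by ring,
    sq, ← mul_assoc]

lemma Continuous.integrable_comp_of_mem_isCompact {Ω E : Type*} [MeasurableSpace Ω]
    {P : Measure Ω} [IsFiniteMeasure P] [TopologicalSpace E] [MeasurableSpace E]
    [OpensMeasurableSpace E] {g : E → ℝ} (hg : Continuous g) {K : Set E} (hK : IsCompact K)
    {f : Ω → E} (hf : Measurable f) (hfK : ∀ ω, f ω ∈ K) : Integrable (fun ω => g (f ω)) P := by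
  obtain ⟨C, hC⟩ := hK.exists_bound_of_continuousOn hg.continuousOn
  exact .of_bound (hg.measurable.comp hf).aestronglyMeasurable C (.of_forall fun ω => hC _ (hfK ω))

lemma abs_integral_sub_integral_le_of_integral_deriv_mul_eq_zero {Ω : Type*} [MeasurableSpace Ω]
    {P : Measure Ω} [IsFiniteMeasure P] {F : ℝ → ℝ} {L : NNReal} (hF : Differentiable ℝ F)
    (hFlip : LipschitzWith L (deriv F)) {Y Y' : Ω → ℝ} (hY : Measurable Y) (hY' : Measurable Y')
    {a b : ℝ} (hYab : ∀ ω, Y ω ∈ Icc a b) (hY'ab : ∀ ω, Y' ω ∈ Icc a b)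
    (horth : ∫ ω, deriv F (Y ω) * (Y' ω - Y ω) ∂P = 0) :
    |∫ ω, F (Y ω) ∂P - ∫ ω, F (Y' ω) ∂P| ≤ L * ∫ ω, |Y ω - Y' ω| ^ 2 ∂P := by
  have hint : ∀ g : ℝ × ℝ → ℝ, Continuous g → Integrable (fun ω => g (Y ω, Y' ω)) P :=
    fun g hg => hg.integrable_comp_of_mem_isCompact (isCompact_Icc.prod isCompact_Icc)
      (hY.prodMk hY') fun ω => ⟨hYab ω, hY'ab ω⟩
  have hFc := hF.continuous
  have hF'c := hFlip.continuous
  have hFY : Integrable (fun ω => F (Y ω)) P := hint (fun p => F p.1) (by fun_prop)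
  have hFY' : Integrable (fun ω => F (Y' ω)) P := hint (fun p => F p.2) (by fun_prop)
  have hlin : Integrable (fun ω => deriv F (Y ω) * (Y' ω - Y ω)) P :=
    hint (fun p => deriv F p.1 * (p.2 - p.1)) (by fun_prop)
  have hdiff : Integrable (fun ω => F (Y' ω) - F (Y ω)) P :=
    hint (fun p => F p.2 - F p.1) (by fun_prop)
  have hrem : Integrable (fun ω => F (Y' ω) - F (Y ω) - deriv F (Y ω) * (Y' ω - Y ω)) P :=
    hint (fun p => F p.2 - F p.1 - deriv F p.1 * (p.2 - p.1)) (by fun_prop)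
  have hsq : Integrable (fun ω => |Y ω - Y' ω| ^ 2) P :=
    hint (fun p => |p.1 - p.2| ^ 2) (by fun_prop)
  calc |∫ ω, F (Y ω) ∂P - ∫ ω, F (Y' ω) ∂P|
      = |∫ ω, (F (Y' ω) - F (Y ω) - deriv F (Y ω) * (Y' ω - Y ω)) ∂P| := by
        rw [integral_sub hdiff hlin, integral_sub hFY' hFY, horth, sub_zero,
          abs_sub_comm]
    _ ≤ ∫ ω, |F (Y' ω) - F (Y ω) - deriv F (Y ω) * (Y' ω - Y ω)| ∂P :=
        abs_integral_le_integral_abs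
    _ ≤ ∫ ω, L * |Y ω - Y' ω| ^ 2 ∂P :=
        integral_mono hrem.abs (hsq.const_mul _) fun ω => by
          simpa only [abs_sub_comm (Y' ω)] using abs_sub_sub_deriv_mul_le hF hFlip (Y ω) (Y' ω)
    _ = L * ∫ ω, |Y ω - Y' ω| ^ 2 ∂P := integral_const_mul _ _

lemma ProbabilityTheory.IndepFun.integral_comp_prod_eq_zero {Ω β γ : Type*} [MeasurableSpace Ω]
    [MeasurableSpace β] [MeasurableSpace γ] {P : Measure Ω} [IsFiniteMeasure P]
    {W : Ω → β} {V : Ω → γ} (hWV : IndepFun W V P) (hW : Measurable W) (hV : Measurable V)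
    {h : β × γ → ℝ} (hh : Measurable h) (hint : Integrable (fun ω => h (W ω, V ω)) P)
    (hzero : ∀ ω, ∫ v, h (W ω, v) ∂(P.map V) = 0) :
    ∫ ω, h (W ω, V ω) ∂P = 0 := by
  have hWV' : Measurable fun ω => (W ω, V ω) := hW.prodMk hV
  have hmap : P.map (fun ω => (W ω, V ω)) = (P.map W).prod (P.map V) :=
    (indepFun_iff_map_prod_eq_prod_map_map hW.aemeasurable hV.aemeasurable).1 hWV
  have hint' : Integrable h ((P.map W).prod (P.map V)) := by
    rw [← hmap]
    exact (integrable_map_measure hh.aestronglyMeasurable hWV'.aemeasurable).2 hint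
  calc ∫ ω, h (W ω, V ω) ∂P = ∫ q, h q ∂(P.map fun ω => (W ω, V ω)) :=
        (integral_map hWV'.aemeasurable hh.aestronglyMeasurable).symm
    _ = ∫ w, ∫ v, h (w, v) ∂(P.map V) ∂(P.map W) := by rw [hmap, integral_prod _ hint']
    _ = ∫ ω, ∫ v, h (W ω, v) ∂(P.map V) ∂P :=
        integral_map hW.aemeasurable hh.stronglyMeasurable.integral_prod_right'.aestronglyMeasurable
    _ = 0 := by simp [hzero]

lemma measurable_of_mem_iSup_comap {Ω ι β : Type*} [mβ : MeasurableSpace β] {f : ι → Ω → β}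
    {s : Set ι} {i : ι} (hi : i ∈ s) : Measurable[⨆ j ∈ s, mβ.comap (f j)] (f i) :=
  Measurable.of_comap_le (le_iSup₂ (f := fun j (_ : j ∈ s) => mβ.comap (f j)) i hi)

lemma ProbabilityTheory.iIndepFun.indepFun_of_measurable_iSup_compl {Ω ι β γ : Type*}
    [MeasurableSpace Ω] [mβ : MeasurableSpace β] [MeasurableSpace γ] {P : Measure Ω} {f : ι → Ω → β}
    (hf : iIndepFun f P) (hmeas : ∀ i, Measurable (f i)) {j : ι} {W : Ω → γ}
    (hW : Measurable[⨆ i ∈ ({j}ᶜ : Set ι), mβ.comap (f i)] W) : IndepFun W (f j) P := by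
  rw [IndepFun_iff_Indep]
  exact indep_of_indep_of_le_right (indep_of_indep_of_le_left
    (indep_iSup_of_disjoint (fun i => (hmeas i).comap_le) ((iIndepFun_iff_iIndep _ _ _).1 hf)
      disjoint_compl_left) hW.comap_le)
    (measurable_of_mem_iSup_comap (mem_singleton j)).comap_le

section Grid

variable {N : ℕ} {x : ℕ → ℝ} {ξ : ℝ}

lemma monotoneOn_grid (hm : ∀ j ≤ N, x j ≤ x (j + 1)) : MonotoneOn x (Iic (N + 1)) :=
  monotoneOn_of_le_add_one ordConnected_Iic fun j _ _ hj => hm j (by simpa using hj)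

lemma exists_segment_of_lt (h0 : x 0 ≤ ξ) :
    ∀ j ≤ N + 1, ξ < x j → ∃ i, i ≤ N ∧ x i ≤ ξ ∧ ξ < x (i + 1)
  | 0, _, hlt => absurd h0 (not_le.2 hlt)
  | j + 1, hj, hlt => by
    by_cases hξ : ξ < x j
    · exact exists_segment_of_lt h0 j (by omega) hξ
    · exact ⟨j, by omega, not_lt.1 hξ, hlt⟩

lemma segment_unique (hm : ∀ j ≤ N, x j ≤ x (j + 1)) {i j : ℕ}
    (hi : i ≤ N ∧ x i ≤ ξ ∧ ξ < x (i + 1)) (hj : j ≤ N ∧ x j ≤ ξ ∧ ξ < x (j + 1)) : i = j := by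
  by_contra hne
  wlog hij : i < j generalizing i j
  · exact this hj hi (Ne.symm hne) (by omega)
  have := monotoneOn_grid hm (mem_Iic.2 (by omega)) (mem_Iic.2 (by omega)) (Nat.succ_le_of_lt hij)
  linarith [hi.2.2, hj.2.1]

lemma jstar_le : jstar N x ξ ≤ N := by
  unfold jstar
  split
  · next h => exact h.choose_spec.1
  · exact le_rfl

lemma mem_Icc_jstar (h0 : x 0 ≤ ξ) (hN : ξ ≤ x (N + 1)) :
    ξ ∈ Icc (x (jstar N x ξ)) (x (jstar N x ξ + 1)) := by
  unfold jstar
  split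
  · next h => exact ⟨h.choose_spec.2.1, h.choose_spec.2.2.le⟩
  · next h => exact ⟨not_lt.1 fun hlt => h (exists_segment_of_lt h0 N (by omega) hlt), hN⟩

lemma jstar_preimage_singleton (hm : ∀ j ≤ N, x j ≤ x (j + 1)) (j : ℕ) :
    jstar N x ⁻¹' {j} = {ξ | j ≤ N ∧ x j ≤ ξ ∧ ξ < x (j + 1)} ∪
      {ξ | j = N ∧ ¬ ∃ i, i ≤ N ∧ x i ≤ ξ ∧ ξ < x (i + 1)} := by
  ext ξ
  simp only [mem_preimage, mem_singleton_iff, mem_union, mem_ofPred_eq]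
  constructor
  · rintro rfl
    by_cases h : ∃ i, i ≤ N ∧ x i ≤ ξ ∧ ξ < x (i + 1)
    · left; simpa only [jstar, dif_pos h] using h.choose_spec
    · right; exact ⟨by rw [jstar, dif_neg h], h⟩
  · rintro (hj | ⟨rfl, h⟩)
    · have h : ∃ i, i ≤ N ∧ x i ≤ ξ ∧ ξ < x (i + 1) := ⟨j, hj⟩
      rw [jstar, dif_pos h]
      exact segment_unique hm h.choose_spec hj
    · rw [jstar, dif_neg h]

lemma measurable_jstar (hm : ∀ j ≤ N, x j ≤ x (j + 1)) : Measurable (jstar N x) := by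
  refine measurable_to_countable' fun j => ?_
  rw [jstar_preimage_singleton hm]
  measurability

lemma measurable_dualQ (hm : ∀ j ≤ N, x j ≤ x (j + 1)) :
    Measurable fun q : ℝ × ℝ => dualQ N x q.1 q.2 := by
  let D : (ℝ × ℝ) × ℕ → ℝ := fun p =>
    if x (p.2 + 1) = x p.2 then p.1.1
    else if p.1.2 < (x (p.2 + 1) - p.1.1) / (x (p.2 + 1) - x p.2) then x p.2 else x (p.2 + 1)
  have hD : Measurable D := measurable_from_prod_countable_left fun j => by
    by_cases hj : x (j + 1) = x j
    · simpa only [D, hj, if_true] using measurable_fst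
    · simp only [D, hj, if_false]
      exact Measurable.ite (measurableSet_lt measurable_snd (by fun_prop)) measurable_const
        measurable_const
  exact hD.comp (measurable_id.prodMk ((measurable_jstar hm).comp measurable_fst))

lemma dualQ_mem_Icc (hm : ∀ j ≤ N, x j ≤ x (j + 1)) (h0 : x 0 ≤ ξ) (hN : ξ ≤ x (N + 1))
    (lam : ℝ) : dualQ N x ξ lam ∈ Icc (x 0) (x (N + 1)) := by
  have hξ := mem_Icc_jstar h0 hN
  have hj : jstar N x ξ ≤ N := jstar_le
  have hseg : Icc (x (jstar N x ξ)) (x (jstar N x ξ + 1)) ⊆ Icc (x 0) (x (N + 1)) :=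
    Icc_subset_Icc (monotoneOn_grid hm (by simp) (mem_Iic.2 (by omega)) (Nat.zero_le _))
      (monotoneOn_grid hm (mem_Iic.2 (by omega)) (by simp) (by omega))
  apply hseg
  unfold dualQ
  split_ifs
  · exact hξ
  · exact ⟨le_rfl, hξ.1.trans hξ.2⟩
  · exact ⟨hξ.1.trans hξ.2, le_rfl⟩

lemma setIntegral_dualQ (h0 : x 0 ≤ ξ) (hN : ξ ≤ x (N + 1)) :
    ∫ lam in Icc (0 : ℝ) 1, dualQ N x ξ lam = ξ := by
  obtain ⟨ha, hb⟩ := mem_Icc_jstar h0 hN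
  simp only [dualQ]
  generalize x (jstar N x ξ) = a at *
  generalize x (jstar N x ξ + 1) = b at *
  by_cases hab : b = a
  · simp [hab]
  have hba : 0 < b - a := sub_pos.2 (lt_of_le_of_ne (ha.trans hb) (Ne.symm hab))
  have hθ : (b - ξ) / (b - a) ∈ Icc (0 : ℝ) 1 :=
    ⟨div_nonneg (by linarith) hba.le, (div_le_one hba).2 (by linarith)⟩
  have hcut : Icc (0 : ℝ) 1 ∩ Iio ((b - ξ) / (b - a)) = Ico 0 ((b - ξ) / (b - a)) := by
    ext t
    simp only [mem_inter_iff, mem_Icc, mem_Iio, mem_Ico]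
    exact ⟨fun h => ⟨h.1.1, h.2⟩, fun h => ⟨⟨h.1, h.2.le.trans hθ.2⟩, h.2⟩⟩
  have hfun : ∀ lam : ℝ, (if lam < (b - ξ) / (b - a) then a else b) =
      b + (Iio ((b - ξ) / (b - a))).indicator (fun _ => a - b) lam := by
    intro lam
    by_cases hlam : lam < (b - ξ) / (b - a) <;> simp [hlam]
  simp only [hab, if_false, hfun]
  rw [integral_add (integrable_const b) ((integrable_const _).indicator measurableSet_Iio),
    setIntegral_indicator measurableSet_Iio, hcut]
  simp [hθ.1]
  field_simp
  ring

lemma setIntegral_dualQ_sub (hm : ∀ j ≤ N, x j ≤ x (j + 1)) (h0 : x 0 ≤ ξ)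
    (hN : ξ ≤ x (N + 1)) : ∫ lam in Icc (0 : ℝ) 1, (dualQ N x ξ lam - ξ) = 0 := by
  have hint : Integrable (dualQ N x ξ) (volume.restrict (Icc (0 : ℝ) 1)) :=
    continuous_id.integrable_comp_of_mem_isCompact isCompact_Icc
      ((measurable_dualQ hm).comp (measurable_const.prodMk measurable_id))
      (dualQ_mem_Icc hm h0 hN)
  rw [integral_sub hint (integrable_const ξ), setIntegral_dualQ h0 hN]
  simp

end Grid

lemma add_mul_mem_Icc {X s a z : ℝ} (hX : X ∈ Icc 0 s) (ha : 0 ≤ a) (hz : z = 0 ∨ z = 1) :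
    X + a * z ∈ Icc 0 (s + a) := by
  obtain ⟨h0, hs⟩ := hX
  rcases hz with rfl | rfl <;> constructor <;> linarith

section Scheme

variable {Ω : Type*} {n : ℕ} {Nk : ℕ → ℕ} {x : ℕ → ℕ → ℝ} {α : ℕ → ℝ} {Z Λ : ℕ → Ω → ℝ}

lemma measurable_XhatScheme {m : MeasurableSpace Ω} {k : ℕ}
    (hmono : ∀ i < k, ∀ j ≤ Nk i, x i j ≤ x i (j + 1))
    (hZ : ∀ i, Measurable (Z i)) (hΛ : ∀ i < k, Measurable (Λ i)) :
    Measurable (XhatScheme Nk x α Z Λ k) := by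
  induction k with
  | zero => exact measurable_const
  | succ k ih =>
    have hXk := ih (fun i hi => hmono i (by omega)) (fun i hi => hΛ i (by omega))
    exact (measurable_dualQ (hmono k (by omega))).comp
      ((hXk.add ((hZ k).const_mul (α k))).prodMk (hΛ k (by omega)))

lemma XhatScheme_mem_Icc (hα : ∀ i < n, 0 ≤ α i) (hZ01 : ∀ i < n, ∀ ω, Z i ω = 0 ∨ Z i ω = 1)
    (hmono : ∀ k < n, ∀ j ≤ Nk k, x k j ≤ x k (j + 1)) (hx0 : ∀ k < n, x k 0 = 0)
    (hxN : ∀ k < n, x k (Nk k + 1) = ∑ i ∈ Finset.range (k + 1), α i) :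
    ∀ k ≤ n, ∀ ω, XhatScheme Nk x α Z Λ k ω ∈ Icc 0 (∑ i ∈ Finset.range k, α i)
  | 0, _, _ => by simp [XhatScheme]
  | k + 1, hk, ω => by
    have hξ := add_mul_mem_Icc (XhatScheme_mem_Icc hα hZ01 hmono hx0 hxN k (by omega) ω)
      (hα k hk) (hZ01 k hk ω)
    rw [← Finset.sum_range_succ] at hξ
    rw [← hxN k hk, ← hx0 k hk] at hξ ⊢
    exact dualQ_mem_Icc (hmono k hk) hξ.1 hξ.2 _

noncomputable def hybridScheme (n : ℕ) (Nk : ℕ → ℕ) (x : ℕ → ℕ → ℝ) (α : ℕ → ℝ)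
    (Z Λ : ℕ → Ω → ℝ) (k : ℕ) (ω : Ω) : ℝ :=
  XhatScheme Nk x α Z Λ k ω + ∑ i ∈ Finset.Ico k n, α i * Z i ω

lemma hybridScheme_zero (ω : Ω) :
    hybridScheme n Nk x α Z Λ 0 ω = ∑ i ∈ Finset.range n, α i * Z i ω := by
  simp [hybridScheme, XhatScheme]

lemma hybridScheme_self (ω : Ω) :
    hybridScheme n Nk x α Z Λ n ω = XhatScheme Nk x α Z Λ n ω := by
  simp [hybridScheme]

lemma hybridScheme_sub_succ {k : ℕ} (hk : k < n) (ω : Ω) :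
    hybridScheme n Nk x α Z Λ k ω - hybridScheme n Nk x α Z Λ (k + 1) ω =
      XhatScheme Nk x α Z Λ k ω + α k * Z k ω - XhatScheme Nk x α Z Λ (k + 1) ω := by
  rw [hybridScheme, hybridScheme, Finset.sum_eq_sum_Ico_succ_bot hk]
  ring

lemma measurable_hybridScheme {m : MeasurableSpace Ω} {k : ℕ}
    (hmono : ∀ i < k, ∀ j ≤ Nk i, x i j ≤ x i (j + 1))
    (hZ : ∀ i, Measurable (Z i)) (hΛ : ∀ i < k, Measurable (Λ i)) :
    Measurable (hybridScheme n Nk x α Z Λ k) :=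
  (measurable_XhatScheme hmono hZ hΛ).add
    (Finset.measurable_sum _ fun i _ => (hZ i).const_mul (α i))

lemma hybridScheme_mem_Icc (hα : ∀ i < n, 0 ≤ α i)
    (hZ01 : ∀ i < n, ∀ ω, Z i ω = 0 ∨ Z i ω = 1)
    (hmono : ∀ k < n, ∀ j ≤ Nk k, x k j ≤ x k (j + 1)) (hx0 : ∀ k < n, x k 0 = 0)
    (hxN : ∀ k < n, x k (Nk k + 1) = ∑ i ∈ Finset.range (k + 1), α i) {k : ℕ} (hk : k ≤ n)
    (ω : Ω) : hybridScheme n Nk x α Z Λ k ω ∈ Icc 0 (∑ i ∈ Finset.range n, α i) := by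
  obtain ⟨hX0, hXs⟩ := XhatScheme_mem_Icc hα hZ01 hmono hx0 hxN k hk ω
  have htail : ∀ i ∈ Finset.Ico k n, α i * Z i ω ∈ Icc 0 (α i) := fun i hi => by
    simpa using add_mul_mem_Icc (left_mem_Icc.2 le_rfl) (hα i (Finset.mem_Ico.1 hi).2)
      (hZ01 i (Finset.mem_Ico.1 hi).2 ω)
  rw [← Finset.sum_range_add_sum_Ico _ hk]
  exact ⟨add_nonneg hX0 (Finset.sum_nonneg fun i hi => (htail i hi).1),
    add_le_add hXs (Finset.sum_le_sum fun i hi => (htail i hi).2)⟩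

lemma measurable_XhatScheme_add_mul_prod {m : MeasurableSpace Ω} {k : ℕ}
    (hmono : ∀ i < k, ∀ j ≤ Nk i, x i j ≤ x i (j + 1))
    (hZ : ∀ i, Measurable (Z i)) (hΛ : ∀ i < k, Measurable (Λ i)) {G : ℝ → ℝ}
    (hG : Measurable G) :
    Measurable fun ω => (XhatScheme Nk x α Z Λ k ω + α k * Z k ω,
      G (hybridScheme n Nk x α Z Λ k ω)) :=
  ((measurable_XhatScheme hmono hZ hΛ).add ((hZ k).const_mul (α k))).prodMk
    (hG.comp (measurable_hybridScheme hmono hZ hΛ))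

lemma indepFun_XhatScheme_add_mul_prod [MeasurableSpace Ω] {P : Measure Ω}
    (hZmeas : ∀ i, Measurable (Z i)) (hΛmeas : ∀ i, Measurable (Λ i))
    (hindep : iIndepFun (Sum.elim Z Λ) P) {k : ℕ}
    (hmono : ∀ i < k, ∀ j ≤ Nk i, x i j ≤ x i (j + 1)) {G : ℝ → ℝ} (hG : Measurable G) :
    IndepFun (fun ω => (XhatScheme Nk x α Z Λ k ω + α k * Z k ω,
      G (hybridScheme n Nk x α Z Λ k ω))) (Λ k) P :=
  hindep.indepFun_of_measurable_iSup_compl (fun i => by cases i; exacts [hZmeas _, hΛmeas _])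
    (j := Sum.inr k) <| measurable_XhatScheme_add_mul_prod (Z := Z) (Λ := Λ) hmono
      (fun i => measurable_of_mem_iSup_comap (i := Sum.inl i) Sum.inl_ne_inr)
      (fun i hi => measurable_of_mem_iSup_comap (i := Sum.inr i) fun h => by cases h; omega) hG

lemma integral_mul_hybridScheme_succ_sub_eq_zero [MeasurableSpace Ω] {P : Measure Ω}
    [IsFiniteMeasure P] {k : ℕ} (hk : k < n) (hα : ∀ i < n, 0 ≤ α i)
    (hZmeas : ∀ i, Measurable (Z i)) (hΛmeas : ∀ i, Measurable (Λ i))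
    (hZ01 : ∀ i < n, ∀ ω, Z i ω = 0 ∨ Z i ω = 1)
    (hΛunif : Measure.map (Λ k) P = volume.restrict (Icc (0 : ℝ) 1))
    (hindep : iIndepFun (Sum.elim Z Λ) P)
    (hmono : ∀ k < n, ∀ j ≤ Nk k, x k j ≤ x k (j + 1)) (hx0 : ∀ k < n, x k 0 = 0)
    (hxN : ∀ k < n, x k (Nk k + 1) = ∑ i ∈ Finset.range (k + 1), α i)
    {G : ℝ → ℝ} (hG : Continuous G) :
    ∫ ω, G (hybridScheme n Nk x α Z Λ k ω) *
      (hybridScheme n Nk x α Z Λ (k + 1) ω - hybridScheme n Nk x α Z Λ k ω) ∂P = 0 := by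
  have hY (j : ℕ) (hj : j ≤ k + 1) := measurable_hybridScheme (n := n) (α := α) (k := j)
    (fun i hi => hmono i (by omega)) hZmeas fun i _ => hΛmeas i
  have hmemY (j : ℕ) (hj : j ≤ n) := hybridScheme_mem_Icc (Λ := Λ) hα hZ01 hmono hx0 hxN hj
  have hint : Integrable (fun ω => G (hybridScheme n Nk x α Z Λ k ω) *
      (hybridScheme n Nk x α Z Λ (k + 1) ω - hybridScheme n Nk x α Z Λ k ω)) P :=
    Continuous.integrable_comp_of_mem_isCompact (g := fun p : ℝ × ℝ => G p.1 * (p.2 - p.1))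
      (by fun_prop) (isCompact_Icc.prod isCompact_Icc) ((hY k k.le_succ).prodMk (hY _ le_rfl))
      fun ω => ⟨hmemY k hk.le ω, hmemY (k + 1) hk ω⟩
  have hstep (ω : Ω) : hybridScheme n Nk x α Z Λ (k + 1) ω - hybridScheme n Nk x α Z Λ k ω =
      dualQ (Nk k) (x k) (XhatScheme Nk x α Z Λ k ω + α k * Z k ω) (Λ k ω) -
        (XhatScheme Nk x α Z Λ k ω + α k * Z k ω) := by
    rw [← neg_sub, hybridScheme_sub_succ hk, XhatScheme, neg_sub]
  simp only [hstep] at hint ⊢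
  refine (indepFun_XhatScheme_add_mul_prod hZmeas hΛmeas hindep (fun i hi => hmono i (by omega))
    hG.measurable).integral_comp_prod_eq_zero
    (h := fun q => q.1.2 * (dualQ (Nk k) (x k) q.1.1 q.2 - q.1.1))
    (measurable_XhatScheme_add_mul_prod (fun i hi => hmono i (by omega)) hZmeas
      (fun i _ => hΛmeas i) hG.measurable) (hΛmeas k)
    (by have := measurable_dualQ (hmono k hk); fun_prop) hint fun ω => ?_
  have hξ := add_mul_mem_Icc (XhatScheme_mem_Icc (Λ := Λ) hα hZ01 hmono hx0 hxN k hk.le ω)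
    (hα k hk) (hZ01 k hk ω)
  rw [← Finset.sum_range_succ, ← hxN k hk, ← hx0 k hk] at hξ
  rw [hΛunif, integral_const_mul, setIntegral_dualQ_sub (hmono k hk) hξ.1 hξ.2, mul_zero]

end Scheme

theorem dualQ_global_error_general {Ω : Type*} [MeasurableSpace Ω] (P : Measure Ω)
    [IsProbabilityMeasure P]
    (n : ℕ) (α : ℕ → ℝ)
    (hα : ∀ i < n, 0 < α i)
    (Z Λ : ℕ → Ω → ℝ)
    (hZmeas : ∀ i, Measurable (Z i)) (hΛmeas : ∀ i, Measurable (Λ i))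
    -- the Zᵢ are {0,1}-valued Bernoulli(pᵢ) random variables
    (hZ01 : ∀ i < n, ∀ ω, Z i ω = 0 ∨ Z i ω = 1)
    -- the Λᵢ are uniformly distributed on [0,1]
    (hΛunif : ∀ i < n, Measure.map (Λ i) P = volume.restrict (Set.Icc (0 : ℝ) 1))
    -- joint independence of (Z₁,…,Zₙ,Λ₁,…,Λₙ)
    (hindep : iIndepFun (Sum.elim Z Λ) P)
    -- the grids: `x k 0 = 0 ≤ x k 1 ≤ … ≤ x k (Nk k) ≤ x k (Nk k + 1) = Σ_{i ≤ k} αᵢ`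
    (Nk : ℕ → ℕ) (x : ℕ → ℕ → ℝ)
    (hmono : ∀ k < n, ∀ j ≤ Nk k, x k j ≤ x k (j + 1))
    (hx0 : ∀ k < n, x k 0 = 0)
    (hxN : ∀ k < n, x k (Nk k + 1) = ∑ i ∈ Finset.range (k + 1), α i)
    (F : ℝ → ℝ) (L : NNReal) (hF : ContDiff ℝ 1 F) (hFlip : LipschitzWith L (deriv F)) :
    |(∫ ω, F (∑ i ∈ Finset.range n, α i * Z i ω) ∂P) -
        ∫ ω, F (XhatScheme Nk x α Z Λ n ω) ∂P| ≤
      (L : ℝ) * ∑ k ∈ Finset.range n,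
        ∫ ω, |(XhatScheme Nk x α Z Λ k ω + α k * Z k ω) -
          XhatScheme Nk x α Z Λ (k + 1) ω| ^ 2 ∂P := by
  have hα' : ∀ i < n, 0 ≤ α i := fun i hi => (hα i hi).le
  have hmeas : ∀ {k}, k ≤ n → Measurable (hybridScheme n Nk x α Z Λ k) := fun hk =>
    measurable_hybridScheme (fun i hi => hmono i (by omega)) hZmeas fun i _ => hΛmeas i
  have hmem := fun {k} (hk : k ≤ n) => hybridScheme_mem_Icc (Λ := Λ) hα' hZ01 hmono hx0 hxN hk
  let I : ℕ → ℝ := fun k => ∫ ω, F (hybridScheme n Nk x α Z Λ k ω) ∂P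
  have hstep : ∀ k ∈ Finset.range n, dist (I k) (I (k + 1)) ≤
      (L : ℝ) * ∫ ω, |(XhatScheme Nk x α Z Λ k ω + α k * Z k ω) -
          XhatScheme Nk x α Z Λ (k + 1) ω| ^ 2 ∂P := fun k hk => by
    have hk := Finset.mem_range.1 hk
    simpa only [I, Real.dist_eq, hybridScheme_sub_succ hk] using
      abs_integral_sub_integral_le_of_integral_deriv_mul_eq_zero (hF.differentiable one_ne_zero)
        hFlip (hmeas hk.le) (hmeas hk) (hmem hk.le) (hmem hk)
      (integral_mul_hybridScheme_succ_sub_eq_zero hk hα' hZmeas hΛmeas hZ01 (hΛunif k hk) hindep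
        hmono hx0 hxN hFlip.continuous)
  calc _ = dist (I 0) (I n) := by simp only [I, hybridScheme_zero, hybridScheme_self, Real.dist_eq]
    _ ≤ _ := dist_le_range_sum_dist I n
    _ ≤ _ := Finset.sum_le_sum hstep
    _ = _ := (Finset.mul_sum _ _ _).symm

/-- **Global error bound.** Let `F : ℝ → ℝ` be continuously differentiable with
`L`-Lipschitz derivative. Then the dual quantization scheme satisfies
`|E F(Xⁿ) − E F(X̂ⁿ)| ≤ L · Σ_{k=1}^n E|(X̂ᵏ⁻¹ + αₖ Zₖ) − X̂ᵏ|²`,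
where `Xⁿ = Σ αᵢ Zᵢ` and `X̂ᵏ = J_{Γₖ}(X̂ᵏ⁻¹ + αₖ Zₖ, Λₖ)`. -/
theorem dualQ_global_error {Ω : Type*} [MeasurableSpace Ω] (P : Measure Ω)
    [IsProbabilityMeasure P]
    (n : ℕ) (hn : 1 ≤ n) (α p : ℕ → ℝ)
    (hα : ∀ i < n, 0 < α i) (hp : ∀ i < n, p i ∈ Set.Ioo (0 : ℝ) 1)
    (Z Λ : ℕ → Ω → ℝ)
    (hZmeas : ∀ i, Measurable (Z i)) (hΛmeas : ∀ i, Measurable (Λ i))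
    -- the Zᵢ are {0,1}-valued Bernoulli(pᵢ) random variables
    (hZ01 : ∀ i < n, ∀ ω, Z i ω = 0 ∨ Z i ω = 1)
    (hZp : ∀ i < n, P {ω | Z i ω = 1} = ENNReal.ofReal (p i))
    -- the Λᵢ are uniformly distributed on [0,1]
    (hΛunif : ∀ i < n, Measure.map (Λ i) P = volume.restrict (Set.Icc (0 : ℝ) 1))
    -- joint independence of (Z₁,…,Zₙ,Λ₁,…,Λₙ)
    (hindep : iIndepFun (Sum.elim Z Λ) P)
    -- the grids: `x k 0 = 0 ≤ x k 1 ≤ … ≤ x k (Nk k) ≤ x k (Nk k + 1) = Σ_{i ≤ k} αᵢ`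
    (Nk : ℕ → ℕ) (x : ℕ → ℕ → ℝ)
    (hmono : ∀ k < n, ∀ j ≤ Nk k, x k j ≤ x k (j + 1))
    (hx0 : ∀ k < n, x k 0 = 0)
    (hxN : ∀ k < n, x k (Nk k + 1) = ∑ i ∈ Finset.range (k + 1), α i)
    (F : ℝ → ℝ) (L : NNReal) (hF : ContDiff ℝ 1 F) (hFlip : LipschitzWith L (deriv F)) :
    |(∫ ω, F (∑ i ∈ Finset.range n, α i * Z i ω) ∂P) -
        ∫ ω, F (XhatScheme Nk x α Z Λ n ω) ∂P| ≤
      (L : ℝ) * ∑ k ∈ Finset.range n,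
        ∫ ω, |(XhatScheme Nk x α Z Λ k ω + α k * Z k ω) -
          XhatScheme Nk x α Z Λ (k + 1) ω| ^ 2 ∂P :=
  dualQ_global_error_general P n α hα Z Λ hZmeas hΛmeas hZ01 hΛunif hindep Nk x hmono hx0 hxN F L hF
    hFlip
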